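/- For each index i ∈ {1,…,24}, exactly 9 indices j ∈ {1,…,24} satisfy a_i a_j + b_i b_j + c_i c_j + d_i d_j = 0, where P_j = (a_j:b_j:c_j:d_j) are the 24 points of the F4 configuration. Consequently, the degree-24 polynomial ∏_{j=1}^{24} (a_j x + b_j y + c_j z + d_j w) vanishes to order at least 9 at every point of the F4 configuration, so α(I(F4)^{(9)}) ≤ 24. -/

import Mathlib

open MvPolynomial

/-- A polynomial `F` vanishes to order at least `m` at a point with representative
vector `v` if all partial derivatives of `F` of total order less than `m` vanish at `v`. -/
def vanishesToOrder (F : MvPolynomial (Fin 4) ℂ) (v : Fin 4 → ℂ) (m : ℕ) : Prop :=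
  ∀ l : List (Fin 4), l.length < m →
    eval v (l.foldl (fun G i => pderiv i G) F) = 0

/-- The least degree of a nonzero homogeneous polynomial vanishing to order at least `m`
at every point of the configuration `Z`. -/
noncomputable def alphaSymbolic (Z : Set (Fin 4 → ℂ)) (m : ℕ) : ℕ :=
  sInf { d | ∃ F : MvPolynomial (Fin 4) ℂ, F ≠ 0 ∧ F.IsHomogeneous d ∧
    ∀ v ∈ Z, vanishesToOrder F v m }

/-- The 24 points of the F4 configuration, given by representative vectors. -/
def F4Pts : Fin 24 → (Fin 4 → ℂ) :=
  ![![1, 1, 0, 0], ![1, -1, 0, 0], ![1, 0, 1, 0], ![1, 0, -1, 0],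
    ![1, 0, 0, 1], ![1, 0, 0, -1], ![0, 1, 1, 0], ![0, 1, -1, 0],
    ![0, 1, 0, 1], ![0, 1, 0, -1], ![0, 0, 1, 1], ![0, 0, 1, -1],
    ![1, 0, 0, 0], ![0, 1, 0, 0], ![0, 0, 1, 0], ![0, 0, 0, 1],
    ![1, 1, 1, 1], ![1, 1, -1, -1], ![1, -1, 1, -1], ![1, -1, -1, 1],
    ![-1, 1, 1, 1], ![1, -1, 1, 1], ![1, 1, -1, 1], ![1, 1, 1, -1]]

/-- The F4 configuration as a set of points. -/
def F4Config : Set (Fin 4 → ℂ) := Set.range F4Pts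

/-- The product of the 24 linear forms dual to the points of the F4 configuration. -/
noncomputable def dualPlanesProduct : MvPolynomial (Fin 4) ℂ :=
  ∏ j : Fin 24, (∑ k : Fin 4, C (F4Pts j k) * X k)

/-!
Orthogonality among the 24 integer vectors is a finite computation. By the Leibniz rule, a
product of polynomials vanishes at `v` to order at least the number of factors vanishing at
`v`; as exactly 9 of the dual linear forms vanish at each point, their product vanishes to
order 9 there, and it is a nonzero form of degree 24.
-/

open Finset

namespace MvPolynomial

variable {σ R : Type*} [CommSemiring R]

theorem foldl_pderiv_add (l : List σ) (F G : MvPolynomial σ R) :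
    l.foldl (fun H i => pderiv i H) (F + G) =
      l.foldl (fun H i => pderiv i H) F + l.foldl (fun H i => pderiv i H) G := by
  induction l generalizing F G with
  | nil => rfl
  | cons i l ih => simp only [List.foldl_cons, map_add, ih]

noncomputable def linearForm [Fintype σ] (a : σ → R) : MvPolynomial σ R :=
  ∑ k, C (a k) * X k

variable [Fintype σ]

theorem eval_linearForm (v a : σ → R) : eval v (linearForm a) = ∑ k, v k * a k := by
  simp [linearForm, mul_comm]

theorem isHomogeneous_linearForm (a : σ → R) : (linearForm a).IsHomogeneous 1 :=
  IsHomogeneous.sum _ _ _ fun _ _ => isHomogeneous_C_mul_X _ _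

theorem coeff_single_linearForm [DecidableEq σ] (a : σ → R) (k : σ) :
    coeff (Finsupp.single k 1) (linearForm a) = a k := by
  simp [linearForm, coeff_sum, coeff_C_mul, coeff_X, Finsupp.single_left_inj one_ne_zero]

theorem linearForm_ne_zero {a : σ → R} (ha : a ≠ 0) : linearForm a ≠ 0 := by
  classical
  contrapose! ha
  funext k
  rw [← coeff_single_linearForm a k, ha, coeff_zero, Pi.zero_apply]

end MvPolynomial

section vanishesToOrder

variable {F G : MvPolynomial (Fin 4) ℂ} {v : Fin 4 → ℂ} {a b : ℕ}

theorem vanishesToOrder_zero (F : MvPolynomial (Fin 4) ℂ) (v : Fin 4 → ℂ) :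
    vanishesToOrder F v 0 :=
  fun _ hl => absurd hl (Nat.not_lt_zero _)

theorem vanishesToOrder_one_iff : vanishesToOrder F v 1 ↔ eval v F = 0 := by
  refine ⟨fun h => h [] Nat.one_pos, fun h l hl => ?_⟩
  rw [List.length_eq_zero_iff.mp (Nat.lt_one_iff.mp hl)]
  exact h

theorem vanishesToOrder.pderiv (h : vanishesToOrder F v a) (i : Fin 4) :
    vanishesToOrder (pderiv i F) v (a - 1) :=
  fun l hl => h (i :: l) (by rw [List.length_cons]; omega)

theorem vanishesToOrder.mul (hF : vanishesToOrder F v a) (hG : vanishesToOrder G v b) :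
    vanishesToOrder (F * G) v (a + b) := by
  intro l hl
  induction l generalizing F G a b with
  | nil =>
    rw [List.foldl_nil, map_mul]
    rcases Nat.eq_zero_or_pos a with rfl | ha
    · exact mul_eq_zero_of_right _ (hG [] (by simpa using hl))
    · exact mul_eq_zero_of_left (hF [] ha) _
  | cons i l ih =>
    rw [List.length_cons] at hl
    rw [List.foldl_cons, pderiv_mul, foldl_pderiv_add, map_add,
      ih (hF.pderiv i) hG (by omega), ih hF (hG.pderiv i) (by omega), add_zero]

theorem vanishesToOrder_prod {ι : Type*} (s : Finset ι) (L : ι → MvPolynomial (Fin 4) ℂ) :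
    vanishesToOrder (∏ j ∈ s, L j) v #{j ∈ s | eval v (L j) = 0} := by
  classical
  induction s using Finset.induction_on with
  | empty => exact vanishesToOrder_zero _ _
  | insert j s hj ih =>
    rw [prod_insert hj, filter_insert]
    by_cases hL : eval v (L j) = 0
    · rw [if_pos hL, card_insert_of_notMem (fun h => hj (mem_filter.mp h).1), add_comm]
      exact (vanishesToOrder_one_iff.mpr hL).mul ih
    · rw [if_neg hL, ← zero_add #_]
      exact (vanishesToOrder_zero _ _).mul ih

end vanishesToOrder

def F4PtsInt : Fin 24 → Fin 4 → ℤ :=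
  ![![1, 1, 0, 0], ![1, -1, 0, 0], ![1, 0, 1, 0], ![1, 0, -1, 0],
    ![1, 0, 0, 1], ![1, 0, 0, -1], ![0, 1, 1, 0], ![0, 1, -1, 0],
    ![0, 1, 0, 1], ![0, 1, 0, -1], ![0, 0, 1, 1], ![0, 0, 1, -1],
    ![1, 0, 0, 0], ![0, 1, 0, 0], ![0, 0, 1, 0], ![0, 0, 0, 1],
    ![1, 1, 1, 1], ![1, 1, -1, -1], ![1, -1, 1, -1], ![1, -1, -1, 1],
    ![-1, 1, 1, 1], ![1, -1, 1, 1], ![1, 1, -1, 1], ![1, 1, 1, -1]]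

theorem F4Pts_eq_cast (i : Fin 24) (k : Fin 4) : F4Pts i k = F4PtsInt i k := by
  fin_cases i <;> fin_cases k <;> simp [F4Pts, F4PtsInt]

set_option maxRecDepth 10000 in
theorem card_orthogonal_F4PtsInt (i : Fin 24) :
    #{j | ∑ k, F4PtsInt i k * F4PtsInt j k = 0} = 9 := by
  revert i; decide

theorem card_orthogonal_F4Pts (i : Fin 24) :
    #{j | ∑ k, F4Pts i k * F4Pts j k = 0} = 9 := by
  simp only [F4Pts_eq_cast]
  exact_mod_cast card_orthogonal_F4PtsInt i

theorem F4Pts_ne_zero (j : Fin 24) : F4Pts j ≠ 0 := by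
  have hInt : F4PtsInt j ≠ 0 := by revert j; decide
  contrapose! hInt
  funext k
  have hk := congrFun hInt k
  rw [F4Pts_eq_cast, Pi.zero_apply] at hk
  exact_mod_cast hk

theorem dualPlanesProduct_eq : dualPlanesProduct = ∏ j, linearForm (F4Pts j) := rfl

theorem vanishesToOrder_dualPlanesProduct (i : Fin 24) :
    vanishesToOrder dualPlanesProduct (F4Pts i) 9 := by
  have h := vanishesToOrder_prod (v := F4Pts i) univ fun j => linearForm (F4Pts j)
  rw [dualPlanesProduct_eq]
  simpa only [eval_linearForm, card_orthogonal_F4Pts] using h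

/-- For each point of the F4 configuration, exactly 9 of the 24 dual planes pass through
it; consequently the degree 24 product of the dual linear forms vanishes to order at
least 9 at every point of the configuration, so `α(I(F4)^{(9)}) ≤ 24`. -/
theorem F4_dual_planes :
    (∀ i : Fin 24,
      (Finset.univ.filter fun j : Fin 24 =>
        ∑ k : Fin 4, F4Pts i k * F4Pts j k = 0).card = 9) ∧
    (∀ v ∈ F4Config, vanishesToOrder dualPlanesProduct v 9) ∧
    alphaSymbolic F4Config 9 ≤ 24 := by
  have hvanish : ∀ v ∈ F4Config, vanishesToOrder dualPlanesProduct v 9 := by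
    rintro _ ⟨i, rfl⟩
    exact vanishesToOrder_dualPlanesProduct i
  have hne : dualPlanesProduct ≠ 0 :=
    prod_ne_zero_iff.mpr fun j _ => linearForm_ne_zero (F4Pts_ne_zero j)
  have hhom : dualPlanesProduct.IsHomogeneous 24 := by
    rw [dualPlanesProduct_eq]
    simpa using IsHomogeneous.prod univ _ (fun _ => 1) fun j _ => isHomogeneous_linearForm (F4Pts j)
  exact ⟨card_orthogonal_F4Pts, hvanish, Nat.sInf_le ⟨_, hne, hhom, hvanish⟩⟩
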